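/- The map f ↦ λ(f), assigning to each IFS f ∈ M_Δ its normalized self-similar measure, is continuous from M_Δ into the space of Borel probability measures on X equipped with the weak topology. -/

import Mathlib

open Metric Set MeasureTheory ENNReal Filter

noncomputable section

abbrev Euc (d : ℕ) : Type := EuclideanSpace ℝ (Fin d)

/-- A `δ`-packing of `E`: a countable family of pairwise disjoint open balls with
centers in `E` and radii at most `δ` (radius `0` gives an empty ball, allowing
finite packings). -/
def IsPacking {d : ℕ} (δ : ℝ) (E : Set (Euc d)) (c : ℕ → Euc d) (ρ : ℕ → ℝ) : Prop :=
  (∀ n, c n ∈ E) ∧ (∀ n, 0 ≤ ρ n ∧ ρ n ≤ δ) ∧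
    ∀ m n, m ≠ n → Disjoint (ball (c m) (ρ m)) (ball (c n) (ρ n))

/-- `P^s_δ(E)`: the supremum of `∑ diam(B_i)^s` over all `δ`-packings of `E`. -/
noncomputable def packCount {d : ℕ} (s δ : ℝ) (E : Set (Euc d)) : ℝ≥0∞ :=
  ⨆ (c : ℕ → Euc d) (ρ : ℕ → ℝ) (_ : IsPacking δ E c ρ),
    ∑' n, if 0 < ρ n then ENNReal.ofReal ((2 * ρ n) ^ s) else 0

/-- The `s`-dimensional packing premeasure `P₀^s(E) = inf_{δ>0} P^s_δ(E)`. -/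
noncomputable def packingPre {d : ℕ} (s : ℝ) (E : Set (Euc d)) : ℝ≥0∞ :=
  ⨅ (δ : ℝ) (_ : 0 < δ), packCount s δ E

/-- The `s`-dimensional packing measure
`P^s(E) = inf { ∑ P₀^s(E_n) : E ⊆ ⋃ E_n }`. -/
noncomputable def packingMeasure {d : ℕ} (s : ℝ) (E : Set (Euc d)) : ℝ≥0∞ :=
  ⨅ (F : ℕ → Set (Euc d)) (_ : E ⊆ ⋃ n, F n), ∑' n, packingPre s (F n)

/-- Composition `f_{i₁} ∘ ⋯ ∘ f_{i_k}` along a word. -/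
def wcomp {d N : ℕ} (f : Fin N → Euc d → Euc d) : List (Fin N) → Euc d → Euc d
  | [] => id
  | i :: w => f i ∘ wcomp f w

/-- `K` is in general position: it is not contained in any proper affine subspace
(in particular, in no hyperplane). -/
def GeneralPosition {d : ℕ} (K : Set (Euc d)) : Prop :=
  ∀ H : AffineSubspace ℝ (Euc d), K ⊆ (H : Set (Euc d)) → H = ⊤


/-- A self-similar IFS of contracting similitudes on a compact set `X ⊆ ℝ^d`,
bundled with its attractor `K`. -/
structure IFS (d N : ℕ) (X : Set (Euc d)) where
  f : Fin N → Euc d → Euc d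
  r : Fin N → ℝ
  r_pos : ∀ i, 0 < r i
  r_lt1 : ∀ i, r i < 1
  sim : ∀ i x y, dist (f i x) (f i y) = r i * dist x y
  maps : ∀ i, f i '' X ⊆ X
  K : Set (Euc d)
  K_sub : K ⊆ X
  K_cpt : IsCompact K
  K_ne : K.Nonempty
  K_inv : K = ⋃ i, f i '' K

/-- `D(F,G) ≤ δ`, where `D(F,G) = max_i ‖f_i − g_i‖_∞` (supremum over `X`). -/
def Dle {d N : ℕ} {X : Set (Euc d)} (F G : IFS d N X) (δ : ℝ) : Prop :=
  ∀ i, ∀ x ∈ X, dist (F.f i x) (G.f i x) ≤ δ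

/-- Membership in `M_Δ`: the attractor pieces are pairwise at distance `> Δ`. -/
def sep {d N : ℕ} {X : Set (Euc d)} (Δ : ℝ) (F : IFS d N X) : Prop :=
  ∀ i j, i ≠ j → ∀ p ∈ F.f i '' F.K, ∀ q ∈ F.f j '' F.K, Δ < dist p q

/-- Membership in `M_SSC`: the attractor pieces are pairwise disjoint. -/
def ssc {d N : ℕ} {X : Set (Euc d)} (F : IFS d N X) : Prop :=
  ∀ i j, i ≠ j → Disjoint (F.f i '' F.K) (F.f j '' F.K)

/-- Membership in `M_OSC`: the open set condition holds with some bounded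
nonempty open set. -/
def osc {d N : ℕ} {X : Set (Euc d)} (F : IFS d N X) : Prop :=
  ∃ O : Set (Euc d), IsOpen O ∧ O.Nonempty ∧ Bornology.IsBounded O ∧
    (∀ i, F.f i '' O ⊆ O) ∧ ∀ i j, i ≠ j → Disjoint (F.f i '' O) (F.f j '' O)


/-!
Write `T ψ = ∑ i, p i * ψ ∘ f i` for the transfer operator of a family of contractions with
weights `p`. A self-similar probability measure `μ` satisfies `∫ Tᵏ φ ∂μ = ∫ φ ∂μ` and lives on
`X`, on which `Tᵏ φ` oscillates no more than `φ` does at scale `Rᵏ diam X`. Hence `∫ φ ∂μ` is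
close to `Tᵏ φ x₀` for a depth `k` that only depends on `φ`, `X` and a common contraction bound
`R`. At a fixed depth, `Tᵏ φ x₀` depends continuously on the maps (uniformly on `X`) and on the
weights. The weights depend continuously on the maps: a ratio is read off from the images of two
distinct points of `X`, and the similarity dimension is the crossing point of `1` with the strictly
decreasing function `s ↦ ∑ i, r i ^ s`, which moves continuously with the ratios `r`.
-/

open scoped NNReal Topology BoundedContinuousFunction

section TransferOperator

variable {E ι : Type*} [Fintype ι]

theorem abs_sum_mul_le {p a : ι → ℝ} {M : ℝ} (hp0 : ∀ i, 0 ≤ p i) (hp1 : ∑ i, p i = 1)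
    (ha : ∀ i, |a i| ≤ M) : |∑ i, p i * a i| ≤ M :=
  calc |∑ i, p i * a i| ≤ ∑ i, |p i * a i| := Finset.abs_sum_le_sum_abs _ _
    _ ≤ ∑ i, p i * M := Finset.sum_le_sum fun i _ => by
        rw [abs_mul, abs_of_nonneg (hp0 i)]
        exact mul_le_mul_of_nonneg_left (ha i) (hp0 i)
    _ = M := by rw [← Finset.sum_mul, hp1, one_mul]

def transferOp (p : ι → ℝ) (f : ι → E → E) (ψ : E → ℝ) (x : E) : ℝ :=
  ∑ i, p i * ψ (f i x)

variable {p q : ι → ℝ} {f g : ι → E → E} {ψ χ : E → ℝ} {M : ℝ}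

theorem abs_transferOp_le (hp0 : ∀ i, 0 ≤ p i) (hp1 : ∑ i, p i = 1) (hψ : ∀ x, |ψ x| ≤ M)
    (x : E) : |transferOp p f ψ x| ≤ M :=
  abs_sum_mul_le hp0 hp1 fun i => hψ (f i x)

theorem abs_transferOp_sub_le (hp0 : ∀ i, 0 ≤ p i) (hp1 : ∑ i, p i = 1) {x y : E} {η : ℝ}
    (h : ∀ i, |ψ (f i x) - ψ (f i y)| ≤ η) :
    |transferOp p f ψ x - transferOp p f ψ y| ≤ η := by
  simp only [transferOp, ← Finset.sum_sub_distrib, ← mul_sub]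
  exact abs_sum_mul_le hp0 hp1 h

theorem abs_transferOp_sub_transferOp_le (hp0 : ∀ i, 0 ≤ p i) (hp1 : ∑ i, p i = 1) {z : E}
    {a b : ℝ} (ha : ∀ i, |ψ (f i z) - χ (f i z)| ≤ a) (hb : ∀ i, |χ (f i z) - χ (g i z)| ≤ b)
    (hχ : ∀ x, |χ x| ≤ M) :
    |transferOp p f ψ z - transferOp q g χ z| ≤ a + b + M * ∑ i, |p i - q i| := by
  have hsplit : transferOp p f ψ z - transferOp q g χ z =
      ∑ i, p i * (ψ (f i z) - χ (f i z)) + ∑ i, p i * (χ (f i z) - χ (g i z)) +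
        ∑ i, (p i - q i) * χ (g i z) := by
    simp only [transferOp, ← Finset.sum_add_distrib, ← Finset.sum_sub_distrib]
    exact Finset.sum_congr rfl fun i _ => by ring
  have hweights : |∑ i, (p i - q i) * χ (g i z)| ≤ M * ∑ i, |p i - q i| :=
    calc |∑ i, (p i - q i) * χ (g i z)| ≤ ∑ i, |p i - q i| * M :=
          (Finset.abs_sum_le_sum_abs _ _).trans <| Finset.sum_le_sum fun i _ => by
            rw [abs_mul]; exact mul_le_mul_of_nonneg_left (hχ _) (abs_nonneg _)
      _ = M * ∑ i, |p i - q i| := by rw [← Finset.sum_mul, mul_comm]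
  rw [hsplit]
  exact (abs_add_three _ _ _).trans
    (add_le_add (add_le_add (abs_sum_mul_le hp0 hp1 ha) (abs_sum_mul_le hp0 hp1 hb)) hweights)

theorem abs_transferOp_iterate_le (hp0 : ∀ i, 0 ≤ p i) (hp1 : ∑ i, p i = 1)
    (hψ : ∀ x, |ψ x| ≤ M) (k : ℕ) (x : E) : |(transferOp p f)^[k] ψ x| ≤ M :=
  Function.Iterate.rec (fun χ : E → ℝ => ∀ x, |χ x| ≤ M) hψ (fun _ => abs_transferOp_le hp0 hp1) k x

variable [MetricSpace E]

theorem continuous_transferOp (hf : ∀ i, Continuous (f i)) (hψ : Continuous ψ) :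
    Continuous (transferOp p f ψ) :=
  continuous_finsetSum _ fun i _ => continuous_const.mul (hψ.comp (hf i))

theorem continuous_transferOp_iterate (hf : ∀ i, Continuous (f i)) (hψ : Continuous ψ) (k : ℕ) :
    Continuous ((transferOp p f)^[k] ψ) :=
  Function.Iterate.rec (fun χ : E → ℝ => Continuous χ) hψ (fun _ => continuous_transferOp hf) k

variable {X : Set E} {R : ℝ≥0}

theorem abs_transferOp_iterate_sub_le (hp0 : ∀ i, 0 ≤ p i) (hp1 : ∑ i, p i = 1)
    (hfX : ∀ i, MapsTo (f i) X X) (hfR : ∀ i, LipschitzWith R (f i)) {θ η : ℝ}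
    (hψ : ∀ x ∈ X, ∀ y ∈ X, dist x y ≤ θ → |ψ x - ψ y| ≤ η) (k : ℕ) {x y : E} (hx : x ∈ X)
    (hy : y ∈ X) (hxy : R ^ k * dist x y ≤ θ) :
    |(transferOp p f)^[k] ψ x - (transferOp p f)^[k] ψ y| ≤ η := by
  induction k generalizing x y with
  | zero => simpa using hψ x hx y hy (by simpa using hxy)
  | succ k ih =>
    rw [Function.iterate_succ_apply']
    refine abs_transferOp_sub_le hp0 hp1 fun i => ih (hfX i hx) (hfX i hy) ?_
    calc (R : ℝ) ^ k * dist (f i x) (f i y) ≤ R ^ k * (R * dist x y) :=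
          mul_le_mul_of_nonneg_left ((hfR i).dist_le_mul x y) (by positivity)
      _ = R ^ (k + 1) * dist x y := by ring
      _ ≤ θ := hxy

theorem abs_transferOp_iterate_sub_transferOp_iterate_le (hp0 : ∀ i, 0 ≤ p i)
    (hp1 : ∑ i, p i = 1) (hfX : ∀ i, MapsTo (f i) X X) (hgX : ∀ i, MapsTo (g i) X X) {θ η : ℝ}
    (hfg : ∀ i, ∀ x ∈ X, dist (f i x) (g i x) ≤ θ)
    (hmod : ∀ k, ∀ x ∈ X, ∀ y ∈ X, dist x y ≤ θ →
      |(transferOp q g)^[k] ψ x - (transferOp q g)^[k] ψ y| ≤ η)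
    (hM : ∀ k x, |(transferOp q g)^[k] ψ x| ≤ M) (k : ℕ) {z : E} (hz : z ∈ X) :
    |(transferOp p f)^[k] ψ z - (transferOp q g)^[k] ψ z| ≤ k * (η + M * ∑ i, |p i - q i|) := by
  induction k generalizing z with
  | zero => simp
  | succ k ih =>
    rw [Function.iterate_succ_apply', Function.iterate_succ_apply']
    refine (abs_transferOp_sub_transferOp_le hp0 hp1 (fun i => ih (hfX i hz))
      (fun i => hmod k _ (hfX i hz) _ (hgX i hz) (hfg i z hz)) (hM k)).trans_eq ?_
    push_cast
    ring

end TransferOperator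

section SelfSimilarMeasure

variable {E ι : Type*} [MeasurableSpace E] [Fintype ι] {p : ι → ℝ} {f : ι → E → E}
  {μ : Measure E}

def IsSelfSimilar (μ : Measure E) (p : ι → ℝ) (f : ι → E → E) : Prop :=
  ∀ A, MeasurableSet A → μ A = ∑ i, ENNReal.ofReal (p i) * μ (f i ⁻¹' A)

theorem IsSelfSimilar.eq_sum_map (hμ : IsSelfSimilar μ p f) (hf : ∀ i, Measurable (f i)) :
    μ = ∑ i, ENNReal.ofReal (p i) • μ.map (f i) := by
  ext A hA
  simp only [hμ A hA, Measure.coe_finsetSum, Finset.sum_apply, Measure.smul_apply,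
    Measure.map_apply (hf _) hA, smul_eq_mul]

variable [MetricSpace E] [BorelSpace E]

theorem IsSelfSimilar.integral_transferOp [IsFiniteMeasure μ] (hμ : IsSelfSimilar μ p f)
    (hp0 : ∀ i, 0 ≤ p i) (hf : ∀ i, Continuous (f i)) {ψ : E → ℝ} (hψ : Continuous ψ) {M : ℝ}
    (hψM : ∀ x, |ψ x| ≤ M) : ∫ x, transferOp p f ψ x ∂μ = ∫ x, ψ x ∂μ := by
  have hint : ∀ {χ : E → ℝ} (ν : Measure E) [IsFiniteMeasure ν], Continuous χ →
      (∀ x, |χ x| ≤ M) → Integrable χ ν := fun _ _ hχ hχM =>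
    .of_bound hχ.aestronglyMeasurable M (.of_forall hχM)
  have hfin : ∀ i, IsFiniteMeasure (ENNReal.ofReal (p i) • μ.map (f i)) := fun _ =>
    Measure.smul_finite _ ofReal_ne_top
  calc ∫ x, transferOp p f ψ x ∂μ = ∑ i, p i * ∫ x, ψ (f i x) ∂μ := by
        simp only [transferOp]
        rw [integral_finsetSum _ fun i _ =>
          (hint μ (χ := fun x => ψ (f i x)) (hψ.comp (hf i)) fun x => hψM (f i x)).const_mul _]
        simp only [integral_const_mul]
    _ = ∑ i, ∫ x, ψ x ∂(ENNReal.ofReal (p i) • μ.map (f i)) := by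
        simp only [integral_smul_measure, ENNReal.toReal_ofReal (hp0 _), smul_eq_mul,
          integral_map (hf _).aemeasurable hψ.aestronglyMeasurable]
    _ = ∫ x, ψ x ∂μ := by
        rw [← integral_finsetSum_measure fun i _ => hint _ hψ hψM,
          ← hμ.eq_sum_map fun i => (hf i).measurable]

theorem IsSelfSimilar.integral_transferOp_iterate [IsFiniteMeasure μ] (hμ : IsSelfSimilar μ p f)
    (hp0 : ∀ i, 0 ≤ p i) (hp1 : ∑ i, p i = 1) (hf : ∀ i, Continuous (f i)) {ψ : E → ℝ}
    (hψ : Continuous ψ) {M : ℝ} (hψM : ∀ x, |ψ x| ≤ M) (k : ℕ) :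
    ∫ x, (transferOp p f)^[k] ψ x ∂μ = ∫ x, ψ x ∂μ := by
  induction k with
  | zero => rfl
  | succ k ih =>
    rw [Function.iterate_succ', Function.comp_apply, hμ.integral_transferOp hp0 hf
      (continuous_transferOp_iterate hf hψ k) (abs_transferOp_iterate_le hp0 hp1 hψM k), ih]

/-- The sets `S t k`, where `R ^ k` times the distance to `X` is at least `t`, decrease to `∅` as
`k → ∞`, yet their measures increase with `k` because each `f i` pulls `S t k` back into
`S t (k + 1)`. -/
theorem IsSelfSimilar.ae_mem [IsFiniteMeasure μ] (hμ : IsSelfSimilar μ p f)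
    (hp0 : ∀ i, 0 ≤ p i) (hp1 : ∑ i, p i = 1) {X : Set E} (hX : IsClosed X)
    (hXne : X.Nonempty) (hfX : ∀ i, MapsTo (f i) X X) {R : ℝ≥0}
    (hfR : ∀ i, LipschitzWith R (f i)) (hR : R < 1) : ∀ᵐ x ∂μ, x ∈ X := by
  let S : ℝ → ℕ → Set E := fun t k => {x | ∀ y ∈ X, t ≤ R ^ k * dist x y}
  have hS : ∀ t k, IsClosed (S t k) := fun t k => by
    simp only [S, ofPred_forall]
    exact isClosed_biInter fun y _ => isClosed_le continuous_const (by fun_prop)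
  have hpull : ∀ t k i, f i ⁻¹' S t k ⊆ S t (k + 1) := fun t k i x hx y hy =>
    calc t ≤ R ^ k * dist (f i x) (f i y) := hx _ (hfX i hy)
      _ ≤ R ^ k * (R * dist x y) :=
          mul_le_mul_of_nonneg_left ((hfR i).dist_le_mul x y) (by positivity)
      _ = R ^ (k + 1) * dist x y := by ring
  have hmono : ∀ t, Monotone fun k => μ (S t k) := fun t => monotone_nat_of_le_succ fun k =>
    calc μ (S t k) = ∑ i, ENNReal.ofReal (p i) * μ (f i ⁻¹' S t k) := hμ _ (hS t k).measurableSet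
      _ ≤ ∑ i, ENNReal.ofReal (p i) * μ (S t (k + 1)) := by gcongr with i; exact hpull t k i
      _ = μ (S t (k + 1)) := by
          rw [← Finset.sum_mul, ← ofReal_sum_of_nonneg fun i _ => hp0 i, hp1, ofReal_one, one_mul]
  have hanti : ∀ t, Antitone (S t) := fun t => antitone_nat_of_succ_le fun k x hx y hy =>
    (hx y hy).trans <| by
      gcongr ?_ * _
      exact pow_le_pow_of_le_one R.2 (by exact_mod_cast hR.le) k.le_succ
  have hempty : ∀ t > 0, ⋂ k, S t k = ∅ := fun t ht => by
    obtain ⟨y, hy⟩ := hXne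
    refine eq_empty_of_forall_notMem fun x hx => ?_
    have hlim : Tendsto (fun k => (R : ℝ) ^ k * dist x y) atTop (𝓝 0) := by
      simpa using (_root_.tendsto_pow_atTop_nhds_zero_of_lt_one R.2 hR).mul_const (dist x y)
    obtain ⟨k, hk⟩ := (hlim.eventually (eventually_lt_nhds ht)).exists
    exact (mem_iInter.1 hx k y hy).not_gt hk
  have hnull : ∀ t > 0, μ (S t 0) = 0 := fun t ht => by
    have hlim := tendsto_measure_iInter_atTop (fun k => (hS t k).measurableSet.nullMeasurableSet)
      (hanti t) ⟨0, measure_ne_top μ _⟩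
    rw [hempty t ht, measure_empty] at hlim
    exact nonpos_iff_eq_zero.1 (ge_of_tendsto' hlim fun k => hmono t (Nat.zero_le k))
  have hcover : Xᶜ ⊆ ⋃ n : ℕ, S (1 / (n + 1)) 0 := fun x hx => by
    obtain ⟨n, hn⟩ := exists_nat_one_div_lt ((hX.notMem_iff_infDist_pos hXne).1 hx)
    exact mem_iUnion.2 ⟨n, fun y hy => by simpa using hn.le.trans (infDist_le_dist_of_mem hy)⟩
  exact measure_mono_null hcover (measure_iUnion_null fun n => hnull _ (by positivity))

theorem IsSelfSimilar.abs_integral_sub_transferOp_iterate_le [IsProbabilityMeasure μ]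
    (hμ : IsSelfSimilar μ p f) (hp0 : ∀ i, 0 ≤ p i) (hp1 : ∑ i, p i = 1) {X : Set E}
    (hX : IsClosed X) (hXb : Bornology.IsBounded X) (hfX : ∀ i, MapsTo (f i) X X) {R : ℝ≥0}
    (hfR : ∀ i, LipschitzWith R (f i)) (hR : R < 1) {φ : E → ℝ} (hφ : Continuous φ) {M : ℝ}
    (hφM : ∀ x, |φ x| ≤ M) {θ η : ℝ} (hmod : ∀ x ∈ X, ∀ y ∈ X, dist x y ≤ θ → |φ x - φ y| ≤ η)
    {k : ℕ} (hk : R ^ k * diam X ≤ θ) {x₀ : E} (hx₀ : x₀ ∈ X) :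
    |∫ x, φ x ∂μ - (transferOp p f)^[k] φ x₀| ≤ η := by
  have hf : ∀ i, Continuous (f i) := fun i => (hfR i).continuous
  set ψ := (transferOp p f)^[k] φ
  have hψ : Integrable ψ μ := .of_bound (continuous_transferOp_iterate hf hφ k).aestronglyMeasurable
    M (.of_forall (abs_transferOp_iterate_le hp0 hp1 hφM k))
  have hnear : ∀ᵐ x ∂μ, ‖ψ x - ψ x₀‖ ≤ η :=
    (hμ.ae_mem hp0 hp1 hX ⟨x₀, hx₀⟩ hfX hfR hR).mono fun x hx =>
      abs_transferOp_iterate_sub_le hp0 hp1 hfX hfR hmod k hx hx₀ <|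
        (mul_le_mul_of_nonneg_left (dist_le_diam_of_mem hXb hx hx₀) (by positivity)).trans hk
  calc |∫ x, φ x ∂μ - ψ x₀| = ‖∫ x, ψ x - ψ x₀ ∂μ‖ := by
        rw [integral_sub hψ (integrable_const _), integral_const,
          hμ.integral_transferOp_iterate hp0 hp1 hf hφ hφM k]
        simp
    _ ≤ η := by simpa using norm_integral_le_of_norm_le_const hnear

end SelfSimilarMeasure

section Continuity

variable {E ι : Type*} [MetricSpace E] [MeasurableSpace E] [BorelSpace E] [Fintype ι]

theorem exists_abs_integral_sub_integral_le {X : Set E} (hX : IsCompact X) (hXne : X.Nonempty)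
    {R : ℝ≥0} (hR : R < 1) {p : ι → ℝ} {f : ι → E → E} (hfX : ∀ i, MapsTo (f i) X X)
    (hfR : ∀ i, LipschitzWith R (f i)) (hp0 : ∀ i, 0 ≤ p i) (hp1 : ∑ i, p i = 1)
    {μ : Measure E} [IsProbabilityMeasure μ] (hμ : IsSelfSimilar μ p f) (φ : E →ᵇ ℝ) {ε : ℝ}
    (hε : 0 < ε) :
    ∃ θ > 0, ∃ c > 0, ∀ (q : ι → ℝ) (g : ι → E → E) (ν : Measure E), IsProbabilityMeasure ν →
      (∀ i, MapsTo (g i) X X) → (∀ i, LipschitzWith R (g i)) → (∀ i, 0 ≤ q i) →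
      ∑ i, q i = 1 → IsSelfSimilar ν q g → (∀ i, ∀ x ∈ X, dist (f i x) (g i x) ≤ θ) →
      (∀ i, dist (q i) (p i) < c) → |∫ x, φ x ∂μ - ∫ x, φ x ∂ν| ≤ ε := by
  obtain ⟨x₀, hx₀⟩ := hXne
  have hφM : ∀ x, |φ x| ≤ ‖φ‖ := fun x => by simpa using φ.norm_coe_le_norm x
  have hφ := Metric.uniformContinuousOn_iff_le.1
    (hX.uniformContinuousOn_of_continuous φ.continuous.continuousOn)
  obtain ⟨θ₀, hθ₀, hmod₀⟩ := hφ (ε / 4) (by positivity)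
  have hlim : Tendsto (fun k => (R : ℝ) ^ k * diam X) atTop (𝓝 0) := by
    simpa using (_root_.tendsto_pow_atTop_nhds_zero_of_lt_one R.2 hR).mul_const (diam X)
  obtain ⟨k, hk, hk0⟩ := ((hlim.eventually (ge_mem_nhds hθ₀)).and (eventually_gt_atTop 0)).exists
  obtain ⟨θ, hθ, hmod⟩ := hφ (ε / (4 * k)) (by positivity)
  set c := ε / (4 * k) / (Fintype.card ι * ‖φ‖ + 1)
  refine ⟨θ, hθ, c, by positivity, fun q g ν hν hgX hgR hq0 hq1 hνq hfg hpq => ?_⟩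
  have hμk := hμ.abs_integral_sub_transferOp_iterate_le hp0 hp1 hX.isClosed hX.isBounded hfX hfR
    hR φ.continuous hφM hmod₀ hk hx₀
  have hνk := hνq.abs_integral_sub_transferOp_iterate_le hq0 hq1 hX.isClosed hX.isBounded hgX hgR
    hR φ.continuous hφM hmod₀ hk hx₀
  have hweights : ‖φ‖ * ∑ i, |p i - q i| ≤ ε / (4 * k) :=
    calc ‖φ‖ * ∑ i, |p i - q i| ≤ ‖φ‖ * (Fintype.card ι * c) := by
          gcongr
          refine (Finset.sum_le_sum fun i _ => (?_ : |p i - q i| ≤ c)).trans_eq (by simp)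
          rw [← Real.dist_eq, dist_comm]; exact (hpq i).le
      _ ≤ (Fintype.card ι * ‖φ‖ + 1) * c := by nlinarith [show 0 < c by positivity]
      _ = ε / (4 * k) := mul_div_cancel₀ _ (by positivity)
  have hdepth : |(transferOp p f)^[k] φ x₀ - (transferOp q g)^[k] φ x₀| ≤ ε / 2 :=
    calc _ ≤ k * (ε / (4 * k) + ‖φ‖ * ∑ i, |p i - q i|) :=
          abs_transferOp_iterate_sub_transferOp_iterate_le hp0 hp1 hfX hgX hfg
            (fun j x hx y hy hxy => abs_transferOp_iterate_sub_le hq0 hq1 hgX hgR hmod j hx hy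
              ((mul_le_of_le_one_left dist_nonneg (pow_le_one₀ R.2 hR.le)).trans hxy))
            (abs_transferOp_iterate_le hq0 hq1 hφM) k hx₀
      _ ≤ k * (ε / (4 * k) + ε / (4 * k)) := by gcongr
      _ = ε / 2 := by field_simp; ring
  linarith [abs_sub_le (∫ x, φ x ∂μ) ((transferOp p f)^[k] φ x₀) (∫ x, φ x ∂ν),
    abs_sub_le ((transferOp p f)^[k] φ x₀) ((transferOp q g)^[k] φ x₀) (∫ x, φ x ∂ν),
    abs_sub_comm ((transferOp q g)^[k] φ x₀) (∫ x, φ x ∂ν)]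

end Continuity

section SimilarityDimension

variable {ι : Type*} [Fintype ι] {r : ι → ℝ}

theorem antitone_sum_rpow (h0 : ∀ i, 0 < r i) (h1 : ∀ i, r i ≤ 1) :
    Antitone fun s : ℝ => ∑ i, r i ^ s :=
  fun _ _ hst => Finset.sum_le_sum fun i _ => Real.rpow_le_rpow_of_exponent_ge (h0 i) (h1 i) hst

theorem strictAnti_sum_rpow [Nonempty ι] (h0 : ∀ i, 0 < r i) (h1 : ∀ i, r i < 1) :
    StrictAnti fun s : ℝ => ∑ i, r i ^ s :=
  fun _ _ hst => Finset.sum_lt_sum_of_nonempty Finset.univ_nonempty fun i _ =>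
    Real.rpow_lt_rpow_of_exponent_gt (h0 i) (h1 i) hst

/-- Pairs `(r, s)` where `s` is the similarity dimension of the ratios `r`. -/
def simDimGraph (ι : Type*) [Fintype ι] : Set ((ι → ℝ) × ℝ) :=
  {p | (∀ i, p.1 i ≤ 1) ∧ ∑ i, p.1 i ^ p.2 = 1}

variable {s : ℝ}

theorem tendsto_snd_simDimGraph [Nonempty ι] (h0 : ∀ i, 0 < r i) (h1 : ∀ i, r i < 1)
    (hs : ∑ i, r i ^ s = 1) :
    Tendsto Prod.snd ((𝓝 r).comap Prod.fst ⊓ 𝓟 (simDimGraph ι)) (𝓝 s) := by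
  set L := (𝓝 r).comap Prod.fst ⊓ 𝓟 (simDimGraph ι)
  have hfst : ∀ i, Tendsto (fun p : (ι → ℝ) × ℝ => p.1 i) L (𝓝 (r i)) := fun i =>
    ((continuous_apply i).tendsto r).comp (tendsto_comap.mono_left inf_le_left)
  have hpos : ∀ᶠ p in L, ∀ i, 0 < p.1 i :=
    eventually_all.2 fun i => (hfst i).eventually (eventually_gt_nhds (h0 i))
  have hsum : ∀ a : ℝ, Tendsto (fun p : (ι → ℝ) × ℝ => ∑ i, p.1 i ^ a) L (𝓝 (∑ i, r i ^ a)) :=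
    fun a => tendsto_finsetSum _ fun i _ => (hfst i).rpow_const (Or.inl (h0 i).ne')
  have hgraph : ∀ᶠ p in L, p ∈ simDimGraph ι := mem_inf_of_right (mem_principal_self _)
  refine tendsto_order.2 ⟨fun a ha => ?_, fun b hb => ?_⟩
  · have : 1 < ∑ i, r i ^ a := hs ▸ strictAnti_sum_rpow h0 h1 ha
    filter_upwards [hpos, hgraph, (hsum a).eventually (eventually_gt_nhds this)]
      with p hp hpg hpa
    exact (antitone_sum_rpow hp hpg.1).reflect_lt (hpg.2 ▸ hpa)
  · have : ∑ i, r i ^ b < 1 := hs ▸ strictAnti_sum_rpow h0 h1 hb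
    filter_upwards [hpos, hgraph, (hsum b).eventually (eventually_lt_nhds this)]
      with p hp hpg hpb
    exact (antitone_sum_rpow hp hpg.1).reflect_lt (hpg.2 ▸ hpb)

theorem tendsto_rpow_simDimGraph [Nonempty ι] (h0 : ∀ i, 0 < r i) (h1 : ∀ i, r i < 1)
    (hs : ∑ i, r i ^ s = 1) (i : ι) :
    Tendsto (fun p : (ι → ℝ) × ℝ => p.1 i ^ p.2) ((𝓝 r).comap Prod.fst ⊓ 𝓟 (simDimGraph ι))
      (𝓝 (r i ^ s)) :=
  (((continuous_apply i).tendsto r).comp (tendsto_comap.mono_left inf_le_left)).rpow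
    (tendsto_snd_simDimGraph h0 h1 hs) (Or.inl (h0 i).ne')

theorem exists_nnreal_lt_one_forall_lt (h1 : ∀ i, r i < 1) :
    ∃ R : ℝ≥0, R < 1 ∧ ∀ i, r i < R := by
  obtain ⟨R, hR, hR0, hR1⟩ :=
    ((eventually_all.2 fun i => Ioo_mem_nhdsLT (h1 i)).and (Ioo_mem_nhdsLT zero_lt_one)).exists
  exact ⟨⟨R, hR0.le⟩, hR1, fun i => (hR i).1⟩

end SimilarityDimension

namespace IFS

variable {d N : ℕ} {X : Set (Euc d)} (F G : IFS d N X)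

theorem mapsTo (i : Fin N) : MapsTo (F.f i) X X := fun x hx => F.maps i ⟨x, hx, rfl⟩

theorem lipschitzWith {R : ℝ≥0} (hR : ∀ i, F.r i ≤ R) (i : Fin N) : LipschitzWith R (F.f i) :=
  .of_dist_le_mul fun x y => (F.sim i x y).trans_le (mul_le_mul_of_nonneg_right (hR i) dist_nonneg)

theorem abs_r_sub_mul_dist_le {δ : ℝ} (h : Dle F G δ) {x y : Euc d} (hx : x ∈ X) (hy : y ∈ X)
    (i : Fin N) : |F.r i - G.r i| * dist x y ≤ 2 * δ :=
  calc |F.r i - G.r i| * dist x y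
      = dist (dist (F.f i x) (F.f i y)) (dist (G.f i x) (G.f i y)) := by
        rw [F.sim, G.sim, Real.dist_eq, ← sub_mul, abs_mul, abs_of_nonneg dist_nonneg]
    _ ≤ dist (F.f i x) (G.f i x) + dist (F.f i y) (G.f i y) := dist_dist_dist_le _ _ _ _
    _ ≤ 2 * δ := by linarith [h i x hx, h i y hy]

end IFS

theorem sep.exists_ne {d N : ℕ} {X : Set (Euc d)} {Δ : ℝ} {F : IFS d N X} (hF : sep Δ F)
    (hN : 2 ≤ N) (hΔ : 0 ≤ Δ) : ∃ x ∈ X, ∃ y ∈ X, x ≠ y := by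
  obtain ⟨z, hz⟩ := F.K_ne
  have h01 : (⟨0, by omega⟩ : Fin N) ≠ ⟨1, by omega⟩ := by simp
  exact ⟨_, F.mapsTo _ (F.K_sub hz), _, F.mapsTo _ (F.K_sub hz),
    dist_pos.1 (hΔ.trans_lt (hF _ _ h01 _ ⟨z, hz, rfl⟩ _ ⟨z, hz, rfl⟩))⟩

/-- the map `f ↦ λ(f)` from `M_Δ` to Borel probability measures
with the weak topology is continuous: integrals of bounded continuous functions
vary continuously. -/
theorem stmt17
    {d N : ℕ} (hN : 2 ≤ N) (X : Set (Euc d)) (hX : IsCompact X)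
    (Δ : ℝ) (hΔ : 0 < Δ)
    (F : IFS d N X) (hF : sep Δ F)
    (sF : ℝ) (hsF : ∑ i, F.r i ^ sF = 1)
    (μF : Measure (Euc d)) (hμFp : IsProbabilityMeasure μF)
    (hμFss : ∀ A : Set (Euc d), MeasurableSet A →
      μF A = ∑ i, ENNReal.ofReal (F.r i ^ sF) * μF (F.f i ⁻¹' A)) :
    ∀ φ : BoundedContinuousFunction (Euc d) ℝ, ∀ ε > (0 : ℝ), ∃ δ > (0 : ℝ),
      ∀ G : IFS d N X, sep Δ G → Dle F G δ →
      ∀ sG : ℝ, (∑ i, G.r i ^ sG = 1) →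
      ∀ μG : Measure (Euc d), IsProbabilityMeasure μG →
      (∀ A : Set (Euc d), MeasurableSet A →
        μG A = ∑ i, ENNReal.ofReal (G.r i ^ sG) * μG (G.f i ⁻¹' A)) →
        |(∫ x, φ x ∂μF) - ∫ x, φ x ∂μG| ≤ ε := by
  intro φ ε hε
  have : Nonempty (Fin N) := ⟨⟨0, by omega⟩⟩
  obtain ⟨x, hx, y, hy, hxy⟩ := hF.exists_ne hN hΔ.le
  have hxy : 0 < dist x y := dist_pos.2 hxy
  obtain ⟨R, hR1, hFR⟩ := exists_nnreal_lt_one_forall_lt F.r_lt1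
  obtain ⟨θ, hθ, c, hc, hcore⟩ := exists_abs_integral_sub_integral_le hX ⟨x, hx⟩ hR1 F.mapsTo
    (F.lipschitzWith fun i => (hFR i).le) (fun i => Real.rpow_nonneg (F.r_pos i).le _) hsF hμFss
    φ hε
  have hnear : ∀ᶠ p in (𝓝 F.r).comap Prod.fst ⊓ 𝓟 (simDimGraph (Fin N)),
      (∀ i, p.1 i < (R : ℝ)) ∧ ∀ i, dist (p.1 i ^ p.2) (F.r i ^ sF) < c :=
    ((tendsto_comap.mono_left inf_le_left).eventually (eventually_all.2 fun i =>
      ((continuous_apply i).tendsto _).eventually (eventually_lt_nhds (hFR i)))).and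
      (eventually_all.2 fun i =>
        Metric.tendsto_nhds.1 (tendsto_rpow_simDimGraph F.r_pos F.r_lt1 hsF i) c hc)
  rw [eventually_inf_principal, eventually_comap, Metric.eventually_nhds_iff] at hnear
  obtain ⟨ρ, hρ, hρnear⟩ := hnear
  refine ⟨min θ (ρ * dist x y / 4), by positivity, fun G _ hFG sG hsG μG hμG hμGss => ?_⟩
  have hr : dist G.r F.r < ρ := (dist_pi_lt_iff hρ).2 fun i => by
    have := F.abs_r_sub_mul_dist_le G hFG hx hy i
    rw [Real.dist_eq, abs_sub_comm]
    exact lt_of_mul_lt_mul_right (by nlinarith [min_le_right θ (ρ * dist x y / 4)]) hxy.le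
  obtain ⟨hGR, hGw⟩ := hρnear hr (G.r, sG) rfl ⟨fun i => (G.r_lt1 i).le, hsG⟩
  exact hcore _ _ μG hμG G.mapsTo (G.lipschitzWith fun i => (hGR i).le)
    (fun i => Real.rpow_nonneg (G.r_pos i).le _) hsG hμGss
    (fun i z hz => (hFG i z hz).trans (min_le_left _ _)) hGw
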